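/- arXiv:2205.12907 — 3 statements merged into one kernel-verified Lean document; each statement's English description precedes it below -/
import Mathlib

section
/- Discrete electromagnetic energy balance for the implicit midpoint Maxwell step (Scheme-I): let Δt ∈ ℝ and let E⁰, E¹, B⁰, B¹, J : G → ℝ³ be grid functions satisfying, for all j ∈ G, B¹(j) − B⁰(j) = −Δt · Π((E⁰+E¹)/2)(j) and E¹(j) − E⁰(j) = Δt · Π((B⁰+B¹)/2)(j) − Δt · J(j). Then ∑_{j∈G} (‖E¹(j)‖² + ‖B¹(j)‖²) − ∑_{j∈G} (‖E⁰(j)‖² + ‖B⁰(j)‖²) = −Δt · ∑_{j∈G} J(j) · (E⁰(j) + E¹(j)). -/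
open scoped BigOperators RealInnerProductSpace

/-- The periodic grid index set `G = ZMod N₁ × ZMod N₂ × ZMod N₃`. -/
abbrev Grid (N₁ N₂ N₃ : ℕ) : Type := ZMod N₁ × ZMod N₂ × ZMod N₃

/-- Shift of a grid index by `k` steps in the `d`-th coordinate direction
(periodic wrap-around). -/
def gshift {N₁ N₂ N₃ : ℕ} (d : Fin 3) (k : ℤ) (j : Grid N₁ N₂ N₃) : Grid N₁ N₂ N₃ :=
  if d = 0 then (j.1 + (k : ZMod N₁), j.2.1, j.2.2)
  else if d = 1 then (j.1, j.2.1 + (k : ZMod N₂), j.2.2)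
  else (j.1, j.2.1, j.2.2 + (k : ZMod N₃))

/-- Central difference of a scalar grid function `S` in direction `d`:
`(D_d S)(j) = (S(j+e_d) − S(j−e_d)) / (2Δx_d)`. -/
noncomputable def Dd {N₁ N₂ N₃ : ℕ} (Δx : Fin 3 → ℝ) (d : Fin 3)
    (S : Grid N₁ N₂ N₃ → ℝ) (j : Grid N₁ N₂ N₃) : ℝ :=
  (S (gshift d 1 j) - S (gshift d (-1) j)) / (2 * Δx d)

/-- Discrete curl `Π` of a vector-valued grid function, built from the
central differences `D_d`. -/
noncomputable def discCurl {N₁ N₂ N₃ : ℕ} (Δx : Fin 3 → ℝ)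
    (S : Grid N₁ N₂ N₃ → EuclideanSpace ℝ (Fin 3)) (j : Grid N₁ N₂ N₃) :
    EuclideanSpace ℝ (Fin 3) :=
  (EuclideanSpace.equiv (Fin 3) ℝ).symm
    ![Dd Δx 1 (fun i => S i 2) j - Dd Δx 2 (fun i => S i 1) j,
      Dd Δx 2 (fun i => S i 0) j - Dd Δx 0 (fun i => S i 2) j,
      Dd Δx 0 (fun i => S i 1) j - Dd Δx 1 (fun i => S i 0) j]

/-- The standard cross product on Euclidean three-space. -/
noncomputable def cross3 (a b : EuclideanSpace ℝ (Fin 3)) : EuclideanSpace ℝ (Fin 3) :=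
  (EuclideanSpace.equiv (Fin 3) ℝ).symm
    ![a 1 * b 2 - a 2 * b 1, a 2 * b 0 - a 0 * b 2, a 0 * b 1 - a 1 * b 0]


lemma gshift_gshift {N₁ N₂ N₃ : ℕ} (d : Fin 3) (k l : ℤ) (j : Grid N₁ N₂ N₃) :
    gshift d k (gshift d l j) = gshift d (k + l) j := by
  fin_cases d <;> simp [gshift, add_assoc, add_comm] <;>
    first | rfl | (push_cast; ring)

lemma gshift_zero {N₁ N₂ N₃ : ℕ} (d : Fin 3) (j : Grid N₁ N₂ N₃) :
    gshift d 0 j = j := by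
  fin_cases d <;> simp [gshift]

/-- The shift as an equivalence of the grid. -/
def gshiftEquiv {N₁ N₂ N₃ : ℕ} (d : Fin 3) (k : ℤ) : Grid N₁ N₂ N₃ ≃ Grid N₁ N₂ N₃ where
  toFun := gshift d k
  invFun := gshift d (-k)
  left_inv j := by rw [gshift_gshift, neg_add_cancel, gshift_zero]
  right_inv j := by rw [gshift_gshift, add_neg_cancel, gshift_zero]

/-- Discrete summation by parts: the central difference is skew-adjoint. -/
lemma sum_Dd_mul {N₁ N₂ N₃ : ℕ} [NeZero N₁] [NeZero N₂] [NeZero N₃]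
    (Δx : Fin 3 → ℝ) (d : Fin 3) (S T : Grid N₁ N₂ N₃ → ℝ) :
    (∑ j : Grid N₁ N₂ N₃, Dd Δx d S j * T j)
      + (∑ j : Grid N₁ N₂ N₃, S j * Dd Δx d T j) = 0 := by
  have h1 : ∑ j : Grid N₁ N₂ N₃, S (gshift d 1 j) * T j
      = ∑ j : Grid N₁ N₂ N₃, S j * T (gshift d (-1) j) := by
    rw [← Equiv.sum_comp (gshiftEquiv (N₁ := N₁) (N₂ := N₂) (N₃ := N₃) d (-1))
      (fun j => S (gshift d 1 j) * T j)]
    refine Finset.sum_congr rfl fun j _ => ?_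
    simp [gshiftEquiv, gshift_gshift, gshift_zero]
  have h2 : ∑ j : Grid N₁ N₂ N₃, S (gshift d (-1) j) * T j
      = ∑ j : Grid N₁ N₂ N₃, S j * T (gshift d 1 j) := by
    rw [← Equiv.sum_comp (gshiftEquiv (N₁ := N₁) (N₂ := N₂) (N₃ := N₃) d 1)
      (fun j => S (gshift d (-1) j) * T j)]
    refine Finset.sum_congr rfl fun j _ => ?_
    simp [gshiftEquiv, gshift_gshift, gshift_zero]
  have key : ∀ j : Grid N₁ N₂ N₃, Dd Δx d S j * T j + S j * Dd Δx d T j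
      = (S (gshift d 1 j) * T j - S (gshift d (-1) j) * T j
        + S j * T (gshift d 1 j) - S j * T (gshift d (-1) j)) / (2 * Δx d) := by
    intro j; simp only [Dd]; ring
  rw [← Finset.sum_add_distrib]
  simp only [key]
  rw [← Finset.sum_div]
  have hz : ∑ j : Grid N₁ N₂ N₃,
      (S (gshift d 1 j) * T j - S (gshift d (-1) j) * T j
        + S j * T (gshift d 1 j) - S j * T (gshift d (-1) j)) = 0 := by
    simp only [Finset.sum_sub_distrib, Finset.sum_add_distrib]
    rw [h1, h2]; ring
  rw [hz, zero_div]

/-- The discrete curl is self-adjoint with respect to the grid sum. -/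
lemma sum_curl_symm {N₁ N₂ N₃ : ℕ} [NeZero N₁] [NeZero N₂] [NeZero N₃]
    (Δx : Fin 3 → ℝ) (S T : Grid N₁ N₂ N₃ → EuclideanSpace ℝ (Fin 3)) :
    ∑ j : Grid N₁ N₂ N₃, ⟪discCurl Δx S j, T j⟫
      = ∑ j : Grid N₁ N₂ N₃, ⟪S j, discCurl Δx T j⟫ := by
  have h1 := sum_Dd_mul Δx 1 (fun i => S i 2) (fun j => T j 0)
  have h2 := sum_Dd_mul Δx 2 (fun i => S i 1) (fun j => T j 0)
  have h3 := sum_Dd_mul Δx 2 (fun i => S i 0) (fun j => T j 1)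
  have h4 := sum_Dd_mul Δx 0 (fun i => S i 2) (fun j => T j 1)
  have h5 := sum_Dd_mul Δx 0 (fun i => S i 1) (fun j => T j 2)
  have h6 := sum_Dd_mul Δx 1 (fun i => S i 0) (fun j => T j 2)
  simp only [discCurl, PiLp.inner_apply, RCLike.inner_apply, conj_trivial,
    Fin.sum_univ_three, EuclideanSpace.equiv, PiLp.continuousLinearEquiv_symm_apply,
    Matrix.cons_val_zero, Matrix.cons_val_one, Matrix.head_cons,
    Matrix.cons_val_two, Matrix.tail_cons] at *
  simp only [sub_mul, mul_sub, Finset.sum_add_distrib, Finset.sum_sub_distrib, mul_comm] at *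
  linarith [h1, h2, h3, h4, h5, h6]

/-- Discrete electromagnetic energy balance for the implicit midpoint Maxwell
step (Scheme-I). -/
theorem schemeI_em_energy_balance
    (N₁ N₂ N₃ : ℕ) [NeZero N₁] [NeZero N₂] [NeZero N₃]
    (Δx : Fin 3 → ℝ) (hΔx : ∀ d, 0 < Δx d) (Δt : ℝ)
    (E0 E1 B0 B1 J : Grid N₁ N₂ N₃ → EuclideanSpace ℝ (Fin 3))
    (hB : ∀ j, B1 j - B0 j = -(Δt • discCurl Δx (fun i => ((2:ℝ)⁻¹) • (E0 i + E1 i)) j))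
    (hE : ∀ j, E1 j - E0 j =
      Δt • discCurl Δx (fun i => ((2:ℝ)⁻¹) • (B0 i + B1 i)) j - Δt • J j) :
    (∑ j : Grid N₁ N₂ N₃, (‖E1 j‖ ^ 2 + ‖B1 j‖ ^ 2))
      - (∑ j : Grid N₁ N₂ N₃, (‖E0 j‖ ^ 2 + ‖B0 j‖ ^ 2))
      = -Δt * ∑ j : Grid N₁ N₂ N₃, ⟪J j, E0 j + E1 j⟫ := by
  have hnorm : ∀ a b : EuclideanSpace ℝ (Fin 3),
      ‖a‖ ^ 2 - ‖b‖ ^ 2 = ⟪a - b, b + a⟫ := by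
    intro a b
    rw [inner_sub_left, inner_add_right, inner_add_right,
      real_inner_self_eq_norm_sq, real_inner_self_eq_norm_sq, real_inner_comm a b]
    ring
  set Eb : Grid N₁ N₂ N₃ → EuclideanSpace ℝ (Fin 3) :=
    fun i => ((2:ℝ)⁻¹) • (E0 i + E1 i) with hEbdef
  set Bb : Grid N₁ N₂ N₃ → EuclideanSpace ℝ (Fin 3) :=
    fun i => ((2:ℝ)⁻¹) • (B0 i + B1 i) with hBbdef
  have step : ∀ j : Grid N₁ N₂ N₃,
      (‖E1 j‖ ^ 2 + ‖B1 j‖ ^ 2) - (‖E0 j‖ ^ 2 + ‖B0 j‖ ^ 2)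
        = 2 * Δt * ⟪discCurl Δx Bb j, Eb j⟫ - 2 * Δt * ⟪discCurl Δx Eb j, Bb j⟫
          - Δt * ⟪J j, E0 j + E1 j⟫ := by
    intro j
    have e1 : ‖E1 j‖ ^ 2 - ‖E0 j‖ ^ 2 = ⟪E1 j - E0 j, E0 j + E1 j⟫ := hnorm _ _
    have e2 : ‖B1 j‖ ^ 2 - ‖B0 j‖ ^ 2 = ⟪B1 j - B0 j, B0 j + B1 j⟫ := hnorm _ _
    rw [hE j] at e1
    rw [hB j] at e2
    have hEb : Eb j = ((2:ℝ)⁻¹) • (E0 j + E1 j) := rfl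
    have hBb : Bb j = ((2:ℝ)⁻¹) • (B0 j + B1 j) := rfl
    have f1 : ⟪discCurl Δx Bb j, E0 j + E1 j⟫ = 2 * ⟪discCurl Δx Bb j, Eb j⟫ := by
      rw [hEb, real_inner_smul_right]; ring
    have f2 : ⟪discCurl Δx Eb j, B0 j + B1 j⟫ = 2 * ⟪discCurl Δx Eb j, Bb j⟫ := by
      rw [hBb, real_inner_smul_right]; ring
    rw [inner_sub_left, real_inner_smul_left, real_inner_smul_left, f1] at e1
    rw [inner_neg_left, real_inner_smul_left, f2] at e2
    linarith [e1, e2]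
  calc (∑ j : Grid N₁ N₂ N₃, (‖E1 j‖ ^ 2 + ‖B1 j‖ ^ 2))
      - (∑ j : Grid N₁ N₂ N₃, (‖E0 j‖ ^ 2 + ‖B0 j‖ ^ 2))
      = ∑ j : Grid N₁ N₂ N₃,
          (2 * Δt * ⟪discCurl Δx Bb j, Eb j⟫ - 2 * Δt * ⟪discCurl Δx Eb j, Bb j⟫
            - Δt * ⟪J j, E0 j + E1 j⟫) := by
        rw [← Finset.sum_sub_distrib]
        exact Finset.sum_congr rfl fun j _ => step j
    _ = -Δt * ∑ j : Grid N₁ N₂ N₃, ⟪J j, E0 j + E1 j⟫ := by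
        have key : ∑ j : Grid N₁ N₂ N₃, ⟪discCurl Δx Bb j, Eb j⟫
            = ∑ j : Grid N₁ N₂ N₃, ⟪discCurl Δx Eb j, Bb j⟫ := by
          rw [sum_curl_symm]
          exact Finset.sum_congr rfl fun j _ => real_inner_comm _ _
        simp only [Finset.sum_sub_distrib, ← Finset.mul_sum]
        rw [key]; ring
end

section
/- Total energy conservation of the fully discrete Scheme-II Lorentz-force/Maxwell step (core of Theorem 4.4): let Δt ∈ ℝ, let ρ : G → ℝ, and let u*, u¹, E⁰, E¹, B⁻, B⁰ᐟ², B⁺ : G → ℝ³ be grid functions satisfying, for all j ∈ G: (i) B⁰ᐟ²(j) − B⁻(j) = −Δt · (Π E⁰)(j); (ii) B⁺(j) − B⁰ᐟ²(j) = −Δt · (Π E¹)(j); (iii) E¹(j) − E⁰(j) = Δt · (Π B⁰ᐟ²)(j) − Δt · ρ(j) · (u*(j) + u¹(j))/2; (iv) u¹(j) − u*(j) = Δt · ((E⁰(j) + E¹(j))/2 + ((u*(j) + u¹(j))/2) × B⁰ᐟ²(j)). Then ∑_{j∈G} (ρ(j)‖u¹(j)‖² + ‖E¹(j)‖² + B⁺(j)·B⁰ᐟ²(j))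 = ∑_{j∈G} (ρ(j)‖u*(j)‖² + ‖E⁰(j)‖² + B⁰ᐟ²(j)·B⁻(j)). Since the density ρ and the temperature are unchanged in this step, this is the conservation of the modified discrete total energy ℰ = (ΔV/2)∑_j (ρ_j‖u_j‖² + 3ρ_jT_j + ‖E_j‖² + B_j^{n+1/2}·B_j^{n−1/2}) asserted in Theorem 4.4 for Scheme-II. -/
open scoped BigOperators RealInnerProductSpace

lemma gshift_bij {N₁ N₂ N₃ : ℕ} (d : Fin 3) (k : ℤ) :
    Function.Bijective (gshift (N₁ := N₁) (N₂ := N₂) (N₃ := N₃) d k) := by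
  apply Function.bijective_iff_has_inverse.2
  exact ⟨gshift d (-k), fun j => by rw [gshift_gshift]; simp [gshift_zero],
    fun j => by rw [gshift_gshift]; simp [gshift_zero]⟩

lemma sum_gshift {N₁ N₂ N₃ : ℕ} [NeZero N₁] [NeZero N₂] [NeZero N₃]
    (d : Fin 3) (k : ℤ) (f : Grid N₁ N₂ N₃ → ℝ) :
    ∑ j : Grid N₁ N₂ N₃, f (gshift d k j) = ∑ j : Grid N₁ N₂ N₃, f j :=
  Fintype.sum_bijective _ (gshift_bij d k) _ _ (fun _ => rfl)

lemma sum_Dd {N₁ N₂ N₃ : ℕ} [NeZero N₁] [NeZero N₂] [NeZero N₃]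
    (Δx : Fin 3 → ℝ) (d : Fin 3) (S T : Grid N₁ N₂ N₃ → ℝ) :
    ∑ j : Grid N₁ N₂ N₃, Dd Δx d S j * T j
      = - ∑ j : Grid N₁ N₂ N₃, S j * Dd Δx d T j := by
  have h1 : ∑ j : Grid N₁ N₂ N₃, S (gshift d 1 j) * T j
      = ∑ j : Grid N₁ N₂ N₃, S j * T (gshift d (-1) j) := by
    rw [← sum_gshift d (-1) (fun j => S (gshift d 1 j) * T j)]
    refine Finset.sum_congr rfl fun j _ => ?_
    rw [gshift_gshift]; norm_num [gshift_zero]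
  have h2 : ∑ j : Grid N₁ N₂ N₃, S (gshift d (-1) j) * T j
      = ∑ j : Grid N₁ N₂ N₃, S j * T (gshift d 1 j) := by
    rw [← sum_gshift d 1 (fun j => S (gshift d (-1) j) * T j)]
    refine Finset.sum_congr rfl fun j _ => ?_
    rw [gshift_gshift]; norm_num [gshift_zero]
  have e1 : ∀ j : Grid N₁ N₂ N₃, Dd Δx d S j * T j
      = (2 * Δx d)⁻¹ * (S (gshift d 1 j) * T j)
        - (2 * Δx d)⁻¹ * (S (gshift d (-1) j) * T j) := by
    intro j; simp [Dd]; ring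
  have e2 : ∀ j : Grid N₁ N₂ N₃, S j * Dd Δx d T j
      = (2 * Δx d)⁻¹ * (S j * T (gshift d 1 j))
        - (2 * Δx d)⁻¹ * (S j * T (gshift d (-1) j)) := by
    intro j; simp [Dd]; ring
  simp only [e1, e2, Finset.sum_sub_distrib, ← Finset.mul_sum, h1, h2]
  ring

lemma sum_curl {N₁ N₂ N₃ : ℕ} [NeZero N₁] [NeZero N₂] [NeZero N₃]
    (Δx : Fin 3 → ℝ) (A B : Grid N₁ N₂ N₃ → EuclideanSpace ℝ (Fin 3)) :
    ∑ j : Grid N₁ N₂ N₃, ⟪discCurl Δx A j, B j⟫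
      = ∑ j : Grid N₁ N₂ N₃, ⟪A j, discCurl Δx B j⟫ := by
  have key : ∀ (d : Fin 3) (a b : Fin 3),
      ∑ j : Grid N₁ N₂ N₃, Dd Δx d (fun i => A i a) j * B j b
        = - ∑ j : Grid N₁ N₂ N₃, A j a * Dd Δx d (fun i => B i b) j := by
    intro d a b
    simpa using sum_Dd Δx d (fun i => A i a) (fun i => B i b)
  have expL : ∀ j : Grid N₁ N₂ N₃, ⟪discCurl Δx A j, B j⟫ =
      (Dd Δx 1 (fun i => A i 2) j * B j 0 - Dd Δx 2 (fun i => A i 1) j * B j 0)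
      + (Dd Δx 2 (fun i => A i 0) j * B j 1 - Dd Δx 0 (fun i => A i 2) j * B j 1)
      + (Dd Δx 0 (fun i => A i 1) j * B j 2 - Dd Δx 1 (fun i => A i 0) j * B j 2) := by
    intro j
    simp [discCurl, PiLp.inner_apply, RCLike.inner_apply, Fin.sum_univ_three]
    ring
  have expR : ∀ j : Grid N₁ N₂ N₃, ⟪A j, discCurl Δx B j⟫ =
      (A j 0 * Dd Δx 1 (fun i => B i 2) j - A j 0 * Dd Δx 2 (fun i => B i 1) j)
      + (A j 1 * Dd Δx 2 (fun i => B i 0) j - A j 1 * Dd Δx 0 (fun i => B i 2) j)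
      + (A j 2 * Dd Δx 0 (fun i => B i 1) j - A j 2 * Dd Δx 1 (fun i => B i 0) j) := by
    intro j
    simp [discCurl, PiLp.inner_apply, RCLike.inner_apply, Fin.sum_univ_three]
    ring
  simp only [expL, expR, Finset.sum_add_distrib, Finset.sum_sub_distrib]
  rw [key 1 2 0, key 2 1 0, key 2 0 1, key 0 2 1, key 0 1 2, key 1 0 2]
  ring


/-- Total energy conservation of the fully discrete Scheme-II
Lorentz-force/Maxwell step (core of Theorem 4.4): the modified discrete total
energy `∑_j (ρ‖u‖² + ‖E‖² + B^{n+3/2}·B^{n+1/2})` is conserved. -/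
theorem schemeII_fully_discrete_total_energy
    (N₁ N₂ N₃ : ℕ) [NeZero N₁] [NeZero N₂] [NeZero N₃]
    (Δx : Fin 3 → ℝ) (hΔx : ∀ d, 0 < Δx d) (Δt : ℝ)
    (ρ : Grid N₁ N₂ N₃ → ℝ)
    (ustar u1 E0 E1 Bm Bh Bp : Grid N₁ N₂ N₃ → EuclideanSpace ℝ (Fin 3))
    (hB1 : ∀ j, Bh j - Bm j = -(Δt • discCurl Δx E0 j))
    (hB2 : ∀ j, Bp j - Bh j = -(Δt • discCurl Δx E1 j))
    (hE : ∀ j, E1 j - E0 j =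
      Δt • discCurl Δx Bh j - Δt • (ρ j • (((2:ℝ)⁻¹) • (ustar j + u1 j))))
    (hu : ∀ j, u1 j - ustar j =
      Δt • (((2:ℝ)⁻¹) • (E0 j + E1 j)
        + cross3 (((2:ℝ)⁻¹) • (ustar j + u1 j)) (Bh j))) :
    ∑ j : Grid N₁ N₂ N₃, (ρ j * ‖u1 j‖ ^ 2 + ‖E1 j‖ ^ 2 + ⟪Bp j, Bh j⟫)
      = ∑ j : Grid N₁ N₂ N₃, (ρ j * ‖ustar j‖ ^ 2 + ‖E0 j‖ ^ 2 + ⟪Bh j, Bm j⟫) := by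
  have pointwise : ∀ j : Grid N₁ N₂ N₃,
      ρ j * ‖u1 j‖ ^ 2 + ‖E1 j‖ ^ 2 + ⟪Bp j, Bh j⟫
        = (ρ j * ‖ustar j‖ ^ 2 + ‖E0 j‖ ^ 2 + ⟪Bh j, Bm j⟫)
          + Δt * ⟪discCurl Δx Bh j, E0 j⟫ + Δt * ⟪discCurl Δx Bh j, E1 j⟫
          - Δt * ⟪discCurl Δx E0 j, Bh j⟫ - Δt * ⟪discCurl Δx E1 j, Bh j⟫ := by
    intro j
    have c0 : u1 j 0 - ustar j 0 = Δt * ((2:ℝ)⁻¹ * (E0 j 0 + E1 j 0)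
        + ((2:ℝ)⁻¹ * (ustar j 1 + u1 j 1) * Bh j 2
          - (2:ℝ)⁻¹ * (ustar j 2 + u1 j 2) * Bh j 1)) := congrArg (fun v => v 0) (hu j)
    have c1 : u1 j 1 - ustar j 1 = Δt * ((2:ℝ)⁻¹ * (E0 j 1 + E1 j 1)
        + ((2:ℝ)⁻¹ * (ustar j 2 + u1 j 2) * Bh j 0
          - (2:ℝ)⁻¹ * (ustar j 0 + u1 j 0) * Bh j 2)) := congrArg (fun v => v 1) (hu j)
    have c2 : u1 j 2 - ustar j 2 = Δt * ((2:ℝ)⁻¹ * (E0 j 2 + E1 j 2)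
        + ((2:ℝ)⁻¹ * (ustar j 0 + u1 j 0) * Bh j 1
          - (2:ℝ)⁻¹ * (ustar j 1 + u1 j 1) * Bh j 0)) := congrArg (fun v => v 2) (hu j)
    have hE' : ∀ i : Fin 3, E1 j i - E0 j i
        = Δt * discCurl Δx Bh j i
          - Δt * (ρ j * ((2:ℝ)⁻¹ * (ustar j i + u1 j i))) := fun i => congrArg (fun v => v i) (hE j)
    have hB1' : ∀ i : Fin 3, Bh j i - Bm j i = -(Δt * discCurl Δx E0 j i) :=
      fun i => congrArg (fun v => v i) (hB1 j)
    have hB2' : ∀ i : Fin 3, Bp j i - Bh j i = -(Δt * discCurl Δx E1 j i) :=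
      fun i => congrArg (fun v => v i) (hB2 j)
    simp only [← real_inner_self_eq_norm_sq, PiLp.inner_apply, RCLike.inner_apply,
      conj_trivial, Fin.sum_univ_three]
    linear_combination (ρ j * (u1 j 0 + ustar j 0)) * c0
      + (ρ j * (u1 j 1 + ustar j 1)) * c1
      + (ρ j * (u1 j 2 + ustar j 2)) * c2
      + (E1 j 0 + E0 j 0) * hE' 0 + (E1 j 1 + E0 j 1) * hE' 1 + (E1 j 2 + E0 j 2) * hE' 2
      + Bh j 0 * hB1' 0 + Bh j 1 * hB1' 1 + Bh j 2 * hB1' 2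
      + Bh j 0 * hB2' 0 + Bh j 1 * hB2' 1 + Bh j 2 * hB2' 2
  simp only [pointwise, Finset.sum_add_distrib, Finset.sum_sub_distrib,
    ← Finset.mul_sum]
  rw [sum_curl Δx Bh E0, sum_curl Δx Bh E1,
    show ∑ j : Grid N₁ N₂ N₃, ⟪discCurl Δx E0 j, Bh j⟫
      = ∑ j : Grid N₁ N₂ N₃, ⟪Bh j, discCurl Δx E0 j⟫ from
      Finset.sum_congr rfl fun j _ => real_inner_comm _ _,
    show ∑ j : Grid N₁ N₂ N₃, ⟪discCurl Δx E1 j, Bh j⟫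
      = ∑ j : Grid N₁ N₂ N₃, ⟪Bh j, discCurl Δx E1 j⟫ from
      Finset.sum_congr rfl fun j _ => real_inner_comm _ _]
  ring
end

section
/- Solvability of the Scheme-II update system: for every Δt ∈ ℝ, every ρ ≥ 0 and every B = (B₁, B₂, B₃) ∈ ℝ³, the 6×6 real matrix I₆ + (Δt/2)·A is invertible, where A is the block matrix whose upper-left 3×3 block is 0, whose upper-right 3×3 block is ρ·I₃, whose lower-left 3×3 block is −I₃, and whose lower-right 3×3 block is the skew-symmetric cross-product matrix [[0, −B₃, B₂], [B₃, 0, −B₁], [−B₂, B₁, 0]]. (This is the coefficient matrix of the linear system determining (E^{n+1}, u^{n+1}) in Scheme-II, so the implicit update for the electric field and macroscopic velocity is always uniquely solvable.) -/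
/-!
With `t = Δt / 2`, the upper-left block of `I₆ + t • A` is `I₃`, so the matrix is invertible iff
its Schur complement `(1 + t² ρ) • I₃ + t • [B]ₓ` is. That is a positive multiple of the identity
plus a skew-symmetric matrix `K`, hence invertible: `xᵀ K x = 0`, so `(c • 1 + K) x = 0` forces
`c ‖x‖² = 0`.
-/

namespace Matrix

variable {n R : Type*} [Fintype n] [Field R] [LinearOrder R] [IsStrictOrderedRing R]

theorem dotProduct_mulVec_self_eq_zero_of_transpose_eq_neg {K : Matrix n n R} (hK : Kᵀ = -K)
    (v : n → R) : v ⬝ᵥ (K *ᵥ v) = 0 := by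
  have h : v ⬝ᵥ (K *ᵥ v) = -(v ⬝ᵥ (K *ᵥ v)) := by
    conv_lhs => rw [dotProduct_mulVec, ← mulVec_transpose, hK, neg_mulVec, neg_dotProduct,
      dotProduct_comm]
  linarith

variable [DecidableEq n]

theorem isUnit_smul_one_add_of_transpose_eq_neg {c : R} (hc : 0 < c) {K : Matrix n n R}
    (hK : Kᵀ = -K) : IsUnit (c • 1 + K) := by
  rw [isUnit_iff_isUnit_det, isUnit_iff_ne_zero, Ne, ← exists_mulVec_eq_zero_iff]
  rintro ⟨v, hv0, hv⟩
  have hquad : c * (v ⬝ᵥ v) = 0 := calc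
    c * (v ⬝ᵥ v) = v ⬝ᵥ ((c • 1 + K) *ᵥ v) := by
      rw [add_mulVec, smul_mulVec, one_mulVec, dotProduct_add, dotProduct_smul, smul_eq_mul,
        dotProduct_mulVec_self_eq_zero_of_transpose_eq_neg hK, add_zero]
    _ = 0 := by rw [hv, dotProduct_zero]
  exact hv0 (dotProduct_self_eq_zero.mp ((mul_eq_zero.mp hquad).resolve_left hc.ne'))

theorem isUnit_one_add_smul_fromBlocks_neg_one (t : R) {ρ : R} (hρ : 0 ≤ ρ) {K : Matrix n n R}
    (hK : Kᵀ = -K) : IsUnit (1 + t • fromBlocks (0 : Matrix n n R) (ρ • 1) (-1) K) := by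
  have hblocks : 1 + t • fromBlocks (0 : Matrix n n R) (ρ • 1) (-1) K =
      fromBlocks 1 ((t * ρ) • 1) (-t • 1) (1 + t • K) := by
    rw [← fromBlocks_one, fromBlocks_smul, fromBlocks_add]
    congr 1 <;> module
  have hschur : (1 + t • K) - (-t • 1 : Matrix n n R) * (t * ρ) • 1 =
      (1 + t ^ 2 * ρ) • 1 + t • K := by
    rw [smul_mul_smul_comm, Matrix.one_mul]
    module
  rw [hblocks, isUnit_iff_isUnit_det, det_fromBlocks_one₁₁, hschur, ← isUnit_iff_isUnit_det]
  exact isUnit_smul_one_add_of_transpose_eq_neg (by positivity)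
    (by rw [transpose_smul, hK, smul_neg])

/-- The matrix of `v ↦ b ×₃ v`. -/
def crossMatrix {R : Type*} [Ring R] (b : Fin 3 → R) : Matrix (Fin 3) (Fin 3) R :=
  !![0, -b 2, b 1; b 2, 0, -b 0; -b 1, b 0, 0]

theorem crossMatrix_transpose {R : Type*} [Ring R] (b : Fin 3 → R) :
    (crossMatrix b)ᵀ = -crossMatrix b := by
  ext i j
  fin_cases i <;> fin_cases j <;> simp [crossMatrix]

end Matrix

/-- Solvability of the Scheme-II update system: for any `Δt`, any density
`ρ ≥ 0` and any magnetic field `B ∈ ℝ³`, the 6×6 matrix `I₆ + (Δt/2)·A` is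
invertible, where `A` has blocks `[[0, ρI₃], [−I₃, B×]]` with `B×` the
skew-symmetric cross-product matrix of `B`. -/
theorem schemeII_update_matrix_invertible (Δt : ℝ) (ρ : ℝ) (hρ : 0 ≤ ρ)
    (B : Fin 3 → ℝ) :
    IsUnit
      ((1 : Matrix (Fin 6) (Fin 6) ℝ) + (Δt / 2) •
        (Matrix.reindex finSumFinEquiv finSumFinEquiv
          (Matrix.fromBlocks
            (0 : Matrix (Fin 3) (Fin 3) ℝ)
            (ρ • (1 : Matrix (Fin 3) (Fin 3) ℝ))
            (-(1 : Matrix (Fin 3) (Fin 3) ℝ))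
            (!![0, -B 2, B 1; B 2, 0, -B 0; -B 1, B 0, 0])) :
          Matrix (Fin 6) (Fin 6) ℝ)) := by
  have h := (Matrix.isUnit_one_add_smul_fromBlocks_neg_one (Δt / 2) hρ
    (Matrix.crossMatrix_transpose B)).map (Matrix.reindexAlgEquiv ℝ ℝ finSumFinEquiv)
  rwa [map_add, map_one, map_smul, Matrix.coe_reindexAlgEquiv] at h
end
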